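/- Let w be a smooth permutation in S_n (i.e., w avoids (4231) and (3412)) and let u ∈ K, the parity-preserving subgroup of S_{2n}. If u_odd ≤ w and u_even ≤ w in the Bruhat order on S_n, then u ≤ w̃ in the Bruhat order on S_{2n}. -/

import Mathlib

/-- The equivalence `Fin n × Fin 2 ≃ Fin (2*n)`, `(a, b) ↦ 2a + b`. -/
def pairFinEquiv (n : ℕ) : Fin n × Fin 2 ≃ Fin (2 * n) where
  toFun p := ⟨2 * p.1.1 + p.2.1, by have h1 := p.1.2; have h2 := p.2.2; omega⟩
  invFun i := (⟨i.1 / 2, by have := i.2; omega⟩, ⟨i.1 % 2, by omega⟩)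
  left_inv := by
    rintro ⟨⟨a, ha⟩, ⟨b, hb⟩⟩
    simp only [Prod.mk.injEq]
    constructor <;> apply Fin.ext <;> simp <;> omega
  right_inv := by
    rintro ⟨i, hi⟩
    apply Fin.ext
    simp
    omega

/-- The doubling map `w ↦ w̃`, sending a permutation of `{0, …, n-1}` to the permutation of
`{0, …, 2n-1}` with `w̃(2i) = 2w(i)` and `w̃(2i+1) = 2w(i)+1` (the zero-based version of
`w̃(2i) = 2w(i)`, `w̃(2i-1) = 2w(i)-1`). -/
def double {n : ℕ} (w : Equiv.Perm (Fin n)) : Equiv.Perm (Fin (2 * n)) :=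
  (pairFinEquiv n).permCongr (Equiv.prodCongr w (Equiv.refl (Fin 2)))

/-- The number of inversions of a permutation, i.e. its Coxeter length. -/
noncomputable def invLength {n : ℕ} (u : Equiv.Perm (Fin n)) : ℕ :=
  Set.ncard { p : Fin n × Fin n | p.1 < p.2 ∧ u p.2 < u p.1 }

/-- Bruhat order on the symmetric group: the reflexive-transitive closure of the relation
`a → a * t` where `t` is a transposition and `ℓ(a * t) > ℓ(a)`. -/
def BruhatLE {n : ℕ} (x w : Equiv.Perm (Fin n)) : Prop :=
  Relation.ReflTransGen
    (fun a b => (∃ i j : Fin n, b = a * Equiv.swap i j) ∧ invLength a < invLength b) x w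

/-- The subgroup `H` of `S_{2n}` of permutations preserving each pair `{2i, 2i+1}`. -/
def pairSubgroup (n : ℕ) : Subgroup (Equiv.Perm (Fin (2 * n))) where
  carrier := { u | ∀ i, (u i).1 / 2 = i.1 / 2 }
  one_mem' := by intro i; rfl
  mul_mem' := by
    intro a b ha hb i
    rw [Equiv.Perm.mul_apply, ha, hb]
  inv_mem' := by
    intro a ha i
    have h := ha (a⁻¹ i)
    rw [show a (a⁻¹ i) = i from Equiv.apply_symm_apply a i] at h
    omega

/-- The subgroup `K` of `S_{2n}` of parity-preserving permutations. -/
def paritySubgroup (n : ℕ) : Subgroup (Equiv.Perm (Fin (2 * n))) where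
  carrier := { u | ∀ i, (u i).1 % 2 = i.1 % 2 }
  one_mem' := by intro i; rfl
  mul_mem' := by
    intro a b ha hb i
    rw [Equiv.Perm.mul_apply, ha, hb]
  inv_mem' := by
    intro a ha i
    have h := ha (a⁻¹ i)
    rw [show a (a⁻¹ i) = i from Equiv.apply_symm_apply a i] at h
    omega

/-- A permutation of `{0,…,2n-1}` is bi-`H`-reduced if it is increasing on each pair
`{2i, 2i+1}` and so is its inverse. -/
def BiReduced {n : ℕ} (v : Equiv.Perm (Fin (2 * n))) : Prop :=
  ∀ i : Fin n,
    v ⟨2 * i.1, by have := i.2; omega⟩ < v ⟨2 * i.1 + 1, by have := i.2; omega⟩ ∧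
    v⁻¹ ⟨2 * i.1, by have := i.2; omega⟩ < v⁻¹ ⟨2 * i.1 + 1, by have := i.2; omega⟩

/-- Membership of `v` in the double coset `H x H` of `H = pairSubgroup n`. -/
def InPairDoubleCoset {n : ℕ} (x v : Equiv.Perm (Fin (2 * n))) : Prop :=
  ∃ h₁ ∈ pairSubgroup n, ∃ h₂ ∈ pairSubgroup n, v = h₁ * x * h₂

/-- The matrix attached to a double coset `HuH`: the `(i,j)` entry is
`#({2i, 2i+1} ∩ u({2j, 2j+1}))`. -/
noncomputable def cosetMatrix {n : ℕ} (u : Equiv.Perm (Fin (2 * n))) :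
    Matrix (Fin n) (Fin n) ℕ :=
  fun i j => Set.ncard { k : Fin (2 * n) | k.1 / 2 = j.1 ∧ (u k).1 / 2 = i.1 }

/-- The simple reflection `s_j = (j, j+1)` of `S_n` (zero-based). -/
def sRefl {n : ℕ} (j : {j : ℕ // j + 1 < n}) : Equiv.Perm (Fin n) :=
  Equiv.swap ⟨j.1, Nat.lt_of_succ_lt j.2⟩ ⟨j.1 + 1, j.2⟩

/-- A Boolean permutation: a product of distinct simple reflections. -/
def BooleanPerm {n : ℕ} (w : Equiv.Perm (Fin n)) : Prop :=
  ∃ js : List {j : ℕ // j + 1 < n}, (js.map Subtype.val).Nodup ∧ w = (js.map sRefl).prod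

/-- `w` avoids the pattern `(321)`. -/
def Avoids321 {n : ℕ} (w : Equiv.Perm (Fin n)) : Prop :=
  ¬ ∃ i j k : Fin n, i < j ∧ j < k ∧ w k < w j ∧ w j < w i

/-- `w` avoids the pattern `(3412)`. -/
def Avoids3412 {n : ℕ} (w : Equiv.Perm (Fin n)) : Prop :=
  ¬ ∃ i j k l : Fin n, i < j ∧ j < k ∧ k < l ∧ w k < w l ∧ w l < w i ∧ w i < w j

/-- `w` avoids the pattern `(4231)`. -/
def Avoids4231 {n : ℕ} (w : Equiv.Perm (Fin n)) : Prop :=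
  ¬ ∃ i j k l : Fin n, i < j ∧ j < k ∧ k < l ∧ w l < w j ∧ w j < w k ∧ w k < w i

/-!
Index `{0, …, 2n-1}` by `Fin 2 × Fin n` via `(c, i) ↦ 2i + c`. Then `u` acts by `a` on the
even positions and by `b` on the odd ones, i.e. it is the interleaving of `a` and `b`, and `w̃` is
the interleaving of `w` with itself. Interleaving is monotone in each argument: a
length-increasing step `a → a * (i j)` with `i < j` and `a i < a j` becomes the step by the
transposition of `2i` and `2j`, which again increases the length because interleaving preserves
the relative order inside each parity class. Hence `u ≤ interleave w b ≤ interleave w w = w̃`.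
-/

open Equiv Finset

section Inversions

variable {m : ℕ}

def inversions (x : Perm (Fin m)) : Finset (Fin m × Fin m) :=
  univ.filter fun r => r.1 < r.2 ∧ x r.2 < x r.1

lemma invLength_eq_card_inversions (x : Perm (Fin m)) : invLength x = #(inversions x) := by
  rw [invLength, ← Set.ncard_coe_finset]
  congr 1
  ext r
  simp [inversions]

/-- Applies `swap p q` to both entries of a pair, except where that would break `r.1 < r.2`.
On inversions of `x` it is an involution carrying them to inversions of `x * swap p q`. -/
def transferInversion (p q : Fin m) (r : Fin m × Fin m) : Fin m × Fin m :=
  (if r.1 = p ∧ r.2 < q then r.1 else swap p q r.1,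
    if r.2 = q ∧ p < r.1 then r.2 else swap p q r.2)

lemma transferInversion_mem {x : Perm (Fin m)} {p q : Fin m} (hpq : p < q) (hx : x p < x q)
    {r : Fin m × Fin m} (hr : r ∈ inversions x) :
    transferInversion p q r ∈ (inversions (x * swap p q)).erase (p, q) := by
  obtain ⟨i, j⟩ := r
  simp only [inversions, mem_filter, mem_univ, true_and] at hr
  obtain ⟨hij, hxij⟩ := hr
  simp only [inversions, mem_erase, mem_filter, mem_univ, true_and, ne_eq]
  simp only [transferInversion, Prod.ext_iff, Perm.mul_apply, swap_apply_def, ite_and]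
  split_ifs <;> subst_vars <;> simp only [not_true_eq_false, Fin.lt_def, Fin.ext_iff] at * <;>
    omega

lemma transferInversion_transferInversion {p q : Fin m} {r : Fin m × Fin m} (hr : r.1 < r.2) :
    transferInversion p q (transferInversion p q r) = r := by
  obtain ⟨i, j⟩ := r
  simp only [transferInversion, Prod.ext_iff, swap_apply_def]
  simp only [Fin.lt_def, Fin.ext_iff] at *
  split_ifs <;> omega

lemma invLength_lt_mul_swap {x : Perm (Fin m)} {p q : Fin m} (hpq : p < q) (hx : x p < x q) :
    invLength x < invLength (x * swap p q) := by
  rw [invLength_eq_card_inversions, invLength_eq_card_inversions]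
  have hpq_mem : (p, q) ∈ inversions (x * swap p q) := by
    simp only [inversions, mem_filter, mem_univ, true_and]
    simpa [hpq] using hx
  have hinj : Set.InjOn (transferInversion p q) (inversions x) := fun r hr s hs hrs => by
    simp only [inversions, coe_filter, mem_univ, true_and] at hr hs
    rw [← transferInversion_transferInversion hr.1, hrs,
      transferInversion_transferInversion hs.1]
  calc #(inversions x) ≤ #((inversions (x * swap p q)).erase (p, q)) :=
        card_le_card_of_injOn _ (fun r hr => transferInversion_mem hpq hx hr) hinj
    _ < #(inversions (x * swap p q)) := card_erase_lt_of_mem hpq_mem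

lemma invLength_mul_swap_lt {x : Perm (Fin m)} {p q : Fin m} (hpq : p < q) (hx : x q < x p) :
    invLength (x * swap p q) < invLength x := by
  simpa [mul_assoc] using
    invLength_lt_mul_swap (x := x * swap p q) hpq (by simpa using hx)

end Inversions

section Bruhat

variable {m k : ℕ}

lemma exists_lt_of_bruhat_step {a c : Perm (Fin m)} {i j : Fin m} (hc : c = a * swap i j)
    (hlt : invLength a < invLength c) :
    ∃ p q, p < q ∧ a p < a q ∧ c = a * swap p q := by
  subst hc
  have step {p q : Fin m} (hpq : p < q) (hlen : invLength a < invLength (a * swap p q)) :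
      a p < a q := by
    refine (lt_or_gt_of_ne (a.injective.ne hpq.ne)).resolve_right fun h => ?_
    exact (invLength_mul_swap_lt hpq h).not_gt hlen
  rcases lt_trichotomy i j with hij | rfl | hji
  · exact ⟨i, j, hij, step hij hlt, rfl⟩
  · rw [swap_self, ← Perm.one_def, mul_one] at hlt
    exact absurd hlt (lt_irrefl _)
  · rw [swap_comm] at hlt ⊢
    exact ⟨j, i, hji, step hji hlt, rfl⟩

lemma BruhatLE.map {f : Perm (Fin m) → Perm (Fin k)}
    (hf : ∀ a i j, i < j → a i < a j →
      ∃ i' j', i' < j' ∧ f a i' < f a j' ∧ f (a * swap i j) = f a * swap i' j')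
    {x y : Perm (Fin m)} (h : BruhatLE x y) : BruhatLE (f x) (f y) := by
  induction h with
  | refl => exact .refl
  | tail _ hstep ih =>
    obtain ⟨⟨i, j, hc⟩, hlt⟩ := hstep
    obtain ⟨p, q, hpq, hapq, rfl⟩ := exists_lt_of_bruhat_step hc hlt
    obtain ⟨p', q', hpq', hfpq', hf_eq⟩ := hf _ p q hpq hapq
    exact ih.tail ⟨⟨p', q', hf_eq⟩, hf_eq ▸ invLength_lt_mul_swap hpq' hfpq'⟩

end Bruhat

section Interleave

variable {κ : Type*} {n N : ℕ}

/-- The permutation acting by `v c` on the fibre `e (c, ·)` of each `c : κ`. -/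
def interleave (e : κ × Fin n ≃ Fin N) (v : κ → Perm (Fin n)) : Perm (Fin N) :=
  e.permCongr (prodShear (Equiv.refl κ) v)

@[simp]
lemma interleave_apply (e : κ × Fin n ≃ Fin N) (v : κ → Perm (Fin n)) (c : κ) (i : Fin n) :
    interleave e v (e (c, i)) = e (c, v c i) := by
  simp [interleave]

lemma eq_interleave_of_apply {e : κ × Fin n ≃ Fin N} {v : κ → Perm (Fin n)}
    {u : Perm (Fin N)} (h : ∀ c i, u (e (c, i)) = e (c, v c i)) : u = interleave e v := by
  ext1 k
  obtain ⟨⟨c, i⟩, rfl⟩ := e.surjective k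
  rw [h, interleave_apply]

lemma interleave_update_mul_swap [DecidableEq κ] (e : κ × Fin n ≃ Fin N)
    (v : κ → Perm (Fin n)) (c : κ) (x : Perm (Fin n)) (i j : Fin n) :
    interleave e (Function.update v c (x * swap i j)) =
      interleave e (Function.update v c x) * swap (e (c, i)) (e (c, j)) := by
  refine (eq_interleave_of_apply fun d r => ?_).symm
  rcases eq_or_ne d c with rfl | hdc
  · have hinj : Function.Injective fun i => e (d, i) :=
      e.injective.comp (Prod.mk_right_injective d)
    rw [Perm.mul_apply, show swap (e (d, i)) (e (d, j)) (e (d, r)) = e (d, swap i j r) from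
      hinj.swap_apply i j r]
    simp
  · rw [Perm.mul_apply, swap_apply_of_ne_of_ne (by simp [hdc]) (by simp [hdc])]
    simp [hdc]

variable {e : κ × Fin n ≃ Fin N}

lemma bruhatLE_interleave_update [DecidableEq κ] (he : ∀ c, StrictMono fun i => e (c, i))
    (v : κ → Perm (Fin n)) (c : κ) {x y : Perm (Fin n)} (h : BruhatLE x y) :
    BruhatLE (interleave e (Function.update v c x)) (interleave e (Function.update v c y)) := by
  refine BruhatLE.map (f := fun x => interleave e (Function.update v c x)) (fun a i j hij ha =>
    ⟨e (c, i), e (c, j), he c hij, ?_, interleave_update_mul_swap e v c a i j⟩) h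
  simpa using he c ha

lemma bruhatLE_interleave [Fintype κ] [DecidableEq κ] (he : ∀ c, StrictMono fun i => e (c, i))
    {v w : κ → Perm (Fin n)} (h : ∀ c, BruhatLE (v c) (w c)) :
    BruhatLE (interleave e v) (interleave e w) := by
  suffices ∀ s : Finset κ, BruhatLE (interleave e v) (interleave e (s.piecewise w v)) by
    simpa using this univ
  intro s
  induction s using Finset.induction_on with
  | empty =>
    rw [piecewise_empty]
    exact Relation.ReflTransGen.refl
  | insert c s hc ih =>
    have hstep := bruhatLE_interleave_update he (s.piecewise w v) c (h c)
    rw [Function.update_eq_self_iff.2 (s.piecewise_eq_of_notMem w v hc).symm] at hstep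
    rw [piecewise_insert]
    exact Relation.ReflTransGen.trans ih hstep

end Interleave

def pairIndex (n : ℕ) : Fin 2 × Fin n ≃ Fin (2 * n) :=
  (prodComm _ _).trans (pairFinEquiv n)

lemma pairIndex_val {n : ℕ} (c : Fin 2) (i : Fin n) : (pairIndex n (c, i)).1 = 2 * i + c := rfl

lemma strictMono_pairIndex {n : ℕ} (c : Fin 2) : StrictMono fun i : Fin n => pairIndex n (c, i) :=
  fun i j hij => by simp only [Fin.lt_def, pairIndex_val] at hij ⊢; omega

lemma double_eq_interleave {n : ℕ} (w : Perm (Fin n)) :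
    double w = interleave (pairIndex n) fun _ => w :=
  eq_interleave_of_apply fun c i => by simp [double, pairIndex]

/-- If `w ∈ S_n` is smooth (avoids `(4231)` and `(3412)`) and `u ∈ K ≤ S_{2n}` has odd part
`a ≤ w` and even part `b ≤ w` in Bruhat order, then `u ≤ w̃` in the Bruhat order of `S_{2n}`. -/
theorem stmt19 (n : ℕ) (w : Equiv.Perm (Fin n))
    (u : Equiv.Perm (Fin (2 * n)))
    (a b : Equiv.Perm (Fin n))
    (hab : ∀ i : Fin n,
      u ⟨2 * i.1, by have := i.2; omega⟩
          = ⟨2 * (a i).1, by have := (a i).2; omega⟩ ∧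
      u ⟨2 * i.1 + 1, by have := i.2; omega⟩
          = ⟨2 * (b i).1 + 1, by have := (b i).2; omega⟩)
    (ha : BruhatLE a w) (hb : BruhatLE b w) :
    BruhatLE u (double w) := by
  have hu : u = interleave (pairIndex n) ![a, b] := eq_interleave_of_apply fun c i => by
    fin_cases c
    · exact (hab i).1
    · exact (hab i).2
  rw [hu, double_eq_interleave]
  exact bruhatLE_interleave strictMono_pairIndex (Fin.forall_fin_two.2 ⟨ha, hb⟩)
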